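/- arXiv:2109.10218 — 3 statements merged into one kernel-verified Lean document; each statement's English description precedes it below -/
import Mathlib

section
/- For real parameters a, b with the hypergeometric series convergent, the integral over t from 0 to π/2 of F(a, b; 1/2; κ²·sin²t) dt equals (π/2)·F(a, b; 1; κ²), for κ ∈ (0,1). -/
open Real

/-- The Gauss hypergeometric series ₂F₁(a,b;c;x) as a real function. -/
noncomputable def hypF (a b c x : ℝ) : ℝ :=
  ∑' n : ℕ, ((ascPochhammer ℝ n).eval a * (ascPochhammer ℝ n).eval b) /
    ((ascPochhammer ℝ n).eval c * n.factorial) * x ^ n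

lemma ascPochhammer_eval_one' (n : ℕ) :
    (ascPochhammer ℝ n).eval (1 : ℝ) = (n.factorial : ℝ) := by
  induction n with
  | zero => simp
  | succ n ih =>
    rw [ascPochhammer_succ_eval, ih, Nat.factorial_succ]
    push_cast
    ring

lemma ascPochhammer_half_pos (n : ℕ) :
    0 < (ascPochhammer ℝ n).eval (1/2 : ℝ) := by
  induction n with
  | zero => simp
  | succ n ih =>
    rw [ascPochhammer_succ_eval]
    positivity

lemma wallis_half (n : ℕ) :
    ∫ t in (0:ℝ)..(π/2), Real.sin t ^ (2*n)
      = π/2 * ((ascPochhammer ℝ n).eval (1/2 : ℝ) / n.factorial) := by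
  induction n with
  | zero => simp
  | succ n ih =>
    have h2 : 2 * (n+1) = 2*n + 2 := by ring
    rw [h2, integral_sin_pow, ih, Real.sin_zero, Real.cos_pi_div_two,
      ascPochhammer_succ_eval, Nat.factorial_succ]
    have hfac : (n.factorial : ℝ) ≠ 0 := by positivity
    push_cast
    field_simp
    ring

/-- Abel-type bound: if partial sums of `d` are bounded by `C`, so are partial sums of
`d n * s ^ n` for `s ∈ [0,1]`. -/
lemma abel_bound (d : ℕ → ℝ) (C : ℝ) (hC : ∀ N, |∑ n ∈ Finset.range N, d n| ≤ C)
    (s : ℝ) (hs0 : 0 ≤ s) (hs1 : s ≤ 1) (N : ℕ) :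
    |∑ n ∈ Finset.range N, d n * s ^ n| ≤ C := by
  have hC0 : 0 ≤ C := le_trans (abs_nonneg _) (hC 0)
  rcases Nat.eq_zero_or_pos N with rfl | hN
  · simpa using hC0
  have key := Finset.sum_range_by_parts (fun n => s ^ n) d N
  simp only [smul_eq_mul] at key
  have hsum : ∑ n ∈ Finset.range N, d n * s ^ n
      = ∑ n ∈ Finset.range N, s ^ n * d n := by
    simp [mul_comm]
  rw [hsum, key]
  have hpow_anti : ∀ i : ℕ, s ^ (i+1) ≤ s ^ i := fun i =>
    pow_le_pow_of_le_one hs0 hs1 (Nat.le_succ i)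
  calc |s ^ (N-1) * ∑ n ∈ Finset.range N, d n -
        ∑ i ∈ Finset.range (N-1), (s ^ (i+1) - s ^ i) * ∑ j ∈ Finset.range (i+1), d j|
      ≤ |s ^ (N-1) * ∑ n ∈ Finset.range N, d n| +
        |∑ i ∈ Finset.range (N-1), (s ^ (i+1) - s ^ i) * ∑ j ∈ Finset.range (i+1), d j| :=
      abs_sub _ _
    _ ≤ s ^ (N-1) * C + (1 - s ^ (N-1)) * C := by
      gcongr ?_ + ?_
      · rw [abs_mul, abs_pow, abs_of_nonneg hs0]
        gcongr
        exact hC N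
      · calc |∑ i ∈ Finset.range (N-1), (s ^ (i+1) - s ^ i) * ∑ j ∈ Finset.range (i+1), d j|
            ≤ ∑ i ∈ Finset.range (N-1), |(s ^ (i+1) - s ^ i) * ∑ j ∈ Finset.range (i+1), d j| :=
            Finset.abs_sum_le_sum_abs _ _
          _ ≤ ∑ i ∈ Finset.range (N-1), (s ^ i - s ^ (i+1)) * C := by
            apply Finset.sum_le_sum
            intro i _
            rw [abs_mul, abs_sub_comm, abs_of_nonneg (by linarith [hpow_anti i])]
            gcongr
            · linarith [hpow_anti i]
            · exact hC (i+1)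
          _ = (1 - s ^ (N-1)) * C := by
            rw [← Finset.sum_mul, Finset.sum_range_sub' (fun i => s ^ i)]
            simp
    _ = C := by ring

/-- For real parameters a, b with the hypergeometric series convergent, the integral over t
from 0 to π/2 of F(a, b; 1/2; κ²·sin²t) dt equals (π/2)·F(a, b; 1; κ²), for κ ∈ (0,1). -/
theorem stmt0 (a b κ : ℝ) (hκ : κ ∈ Set.Ioo (0:ℝ) 1)
    (hconv : ∀ x : ℝ, |x| ≤ κ^2 →
      Summable (fun n : ℕ => ((ascPochhammer ℝ n).eval a * (ascPochhammer ℝ n).eval b) /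
        ((ascPochhammer ℝ n).eval (1/2) * n.factorial) * x ^ n) ∧
      Summable (fun n : ℕ => ((ascPochhammer ℝ n).eval a * (ascPochhammer ℝ n).eval b) /
        ((ascPochhammer ℝ n).eval 1 * n.factorial) * x ^ n)) :
    ∫ t in (0:ℝ)..(π/2), hypF a b (1/2) (κ^2 * Real.sin t ^ 2)
      = π/2 * hypF a b 1 (κ^2) := by
  obtain ⟨hκ0, hκ1⟩ := hκ
  have hκ2 : (0:ℝ) < κ^2 := by positivity
  -- coefficients
  set c : ℕ → ℝ := fun n => ((ascPochhammer ℝ n).eval a * (ascPochhammer ℝ n).eval b) /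
    ((ascPochhammer ℝ n).eval (1/2) * n.factorial) with hc
  set d : ℕ → ℝ := fun n => c n * (κ^2) ^ n with hd
  have hxκ : ∀ t : ℝ, |κ^2 * Real.sin t ^ 2| ≤ κ^2 := by
    intro t
    rw [abs_of_nonneg (by positivity)]
    nlinarith [Real.sin_sq_le_one t, sq_nonneg (Real.sin t)]
  have hsin01 : ∀ t : ℝ, 0 ≤ Real.sin t ^ 2 ∧ Real.sin t ^ 2 ≤ 1 := fun t =>
    ⟨sq_nonneg _, Real.sin_sq_le_one t⟩
  -- summability of d
  have hd_sum : Summable d := by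
    have := (hconv (κ^2) (by rw [abs_of_nonneg hκ2.le])).1
    exact this
  -- bound on partial sums of d
  obtain ⟨C, hC⟩ : ∃ C : ℝ, ∀ N, |∑ n ∈ Finset.range N, d n| ≤ C := by
    have ht : Filter.Tendsto (fun N => |∑ n ∈ Finset.range N, d n|) Filter.atTop
        (nhds |∑' n, d n|) := (hd_sum.hasSum.tendsto_sum_nat.abs)
    obtain ⟨C, hC⟩ := ht.bddAbove_range
    exact ⟨C, fun N => hC ⟨N, rfl⟩⟩
  -- partial sum functions
  set F : ℕ → ℝ → ℝ := fun N t => ∑ n ∈ Finset.range N, c n * (κ^2 * Real.sin t ^ 2) ^ n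
    with hF
  -- rewrite F using d and s = sin²t
  have hFeq : ∀ N t, F N t = ∑ n ∈ Finset.range N, d n * (Real.sin t ^ 2) ^ n := by
    intro N t
    apply Finset.sum_congr rfl
    intro n _
    rw [hd, mul_pow]
    ring
  -- Step 1: dominated convergence
  have h1 : Filter.Tendsto (fun N => ∫ t in (0:ℝ)..(π/2), F N t) Filter.atTop
      (nhds (∫ t in (0:ℝ)..(π/2), hypF a b (1/2) (κ^2 * Real.sin t ^ 2))) := by
    apply intervalIntegral.tendsto_integral_filter_of_dominated_convergence (fun _ => C)
    · filter_upwards with N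
      apply Continuous.aestronglyMeasurable
      apply continuous_finset_sum
      intro n _
      fun_prop
    · filter_upwards with N
      filter_upwards with t _
      rw [Real.norm_eq_abs, hFeq]
      exact abel_bound d C hC _ (hsin01 t).1 (hsin01 t).2 N
    · exact intervalIntegrable_const
    · filter_upwards with t _
      have hs := (hconv (κ^2 * Real.sin t ^ 2) (hxκ t)).1
      exact hs.hasSum.tendsto_sum_nat
  -- Step 2: compute ∫ F N
  have h2 : ∀ N, ∫ t in (0:ℝ)..(π/2), F N t
      = ∑ n ∈ Finset.range N, π/2 * (((ascPochhammer ℝ n).eval a * (ascPochhammer ℝ n).eval b) /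
        ((ascPochhammer ℝ n).eval (1:ℝ) * n.factorial) * (κ^2) ^ n) := by
    intro N
    rw [hF]
    rw [intervalIntegral.integral_finset_sum]
    · apply Finset.sum_congr rfl
      intro n _
      have hint : ∀ t : ℝ, c n * (κ^2 * Real.sin t ^ 2) ^ n
          = c n * (κ^2) ^ n * Real.sin t ^ (2*n) := by
        intro t
        rw [mul_pow, pow_mul]
        ring
      simp only [hint]
      rw [intervalIntegral.integral_const_mul, wallis_half n]
      have hP : (ascPochhammer ℝ n).eval (1/2 : ℝ) ≠ 0 := (ascPochhammer_half_pos n).ne'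
      have hfac : (n.factorial : ℝ) ≠ 0 := by positivity
      rw [hc, ascPochhammer_eval_one']
      field_simp
    · intro n _
      apply Continuous.intervalIntegrable
      fun_prop
  -- Step 3: convergence of RHS partial sums
  have hsum2 : Summable (fun n : ℕ => ((ascPochhammer ℝ n).eval a * (ascPochhammer ℝ n).eval b) /
      ((ascPochhammer ℝ n).eval (1:ℝ) * n.factorial) * (κ^2) ^ n) :=
    (hconv (κ^2) (by rw [abs_of_nonneg hκ2.le])).2
  have h3 : Filter.Tendsto (fun N => ∫ t in (0:ℝ)..(π/2), F N t) Filter.atTop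
      (nhds (π/2 * hypF a b 1 (κ^2))) := by
    simp only [h2]
    rw [show π/2 * hypF a b 1 (κ^2) = ∑' n : ℕ,
        π/2 * (((ascPochhammer ℝ n).eval a * (ascPochhammer ℝ n).eval b) /
        ((ascPochhammer ℝ n).eval (1:ℝ) * n.factorial) * (κ^2) ^ n) by
      rw [hypF, tsum_mul_left]]
    exact (hsum2.mul_left (π/2)).hasSum.tendsto_sum_nat
  exact tendsto_nhds_unique h1 h3
end

section
/- Fix κ ∈ (0,1), let φ be the inverse of T ↦ ∫₀ᵀ F(1/3, 2/3; 1/2; κ²sin²t) dt, and let K = (π/2)·F(1/3,2/3;1;κ²). Then the derivative δ = φ′ is a periodic function on ℝ with period 2K. -/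
open Real

namespace Stmt3Aux

noncomputable def P (a : ℝ) (n : ℕ) : ℝ := (ascPochhammer ℝ n).eval a

lemma P_pos {a : ℝ} (ha : 0 < a) (n : ℕ) : 0 < P a n := ascPochhammer_pos n a ha

lemma P_succ (a : ℝ) (n : ℕ) : P a (n + 1) = P a n * (a + n) := ascPochhammer_succ_eval n a

lemma P_zero (a : ℝ) : P a 0 = 1 := by simp [P]

/-- The coefficient of the series for F(1/3,2/3;1/2;x). -/
noncomputable def c (n : ℕ) : ℝ :=
  (P (1/3) n * P (2/3) n) / (P (1/2) n * n.factorial)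

lemma c_nonneg (n : ℕ) : 0 ≤ c n := by
  rw [c]
  have h1 := P_pos (by norm_num : (0:ℝ) < 1/3) n
  have h2 := P_pos (by norm_num : (0:ℝ) < 2/3) n
  have h3 := P_pos (by norm_num : (0:ℝ) < 1/2) n
  have h4 : (0:ℝ) < n.factorial := by positivity
  positivity

lemma c_le_one (n : ℕ) : c n ≤ 1 := by
  induction n with
  | zero => simp [c, P_zero]
  | succ n ih =>
    have h1 := P_pos (by norm_num : (0:ℝ) < 1/3) n
    have h2 := P_pos (by norm_num : (0:ℝ) < 2/3) n
    have h3 := P_pos (by norm_num : (0:ℝ) < 1/2) n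
    have h4 : (0:ℝ) < n.factorial := by positivity
    have hrec : c (n + 1) = c n * ((1/3 + n) * (2/3 + n) / ((1/2 + n) * (n + 1))) := by
      rw [c, c, P_succ, P_succ, P_succ, Nat.factorial_succ]
      push_cast
      field_simp
    have hfac : (1/3 + (n:ℝ)) * (2/3 + n) / ((1/2 + n) * (n + 1)) ≤ 1 := by
      rw [div_le_one (by positivity)]
      nlinarith [Nat.cast_nonneg (α := ℝ) n]
    calc c (n + 1) = c n * ((1/3 + n) * (2/3 + n) / ((1/2 + n) * (n + 1))) := hrec
      _ ≤ 1 * 1 := by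
          apply mul_le_mul ih hfac (by positivity) (by norm_num)
      _ = 1 := by norm_num

/-- The Wallis-type product equals `(1/2)_n / n!`. -/
lemma prod_eq (n : ℕ) :
    ∏ i ∈ Finset.range n, (2 * (i : ℝ) + 1) / (2 * i + 2) = P (1/2) n / n.factorial := by
  induction n with
  | zero => simp [P_zero]
  | succ n ih =>
    have h4 : (0:ℝ) < n.factorial := by positivity
    rw [Finset.prod_range_succ, ih, P_succ, Nat.factorial_succ]
    push_cast
    field_simp
    ring

lemma pointwise_bound {κ : ℝ} (hκ : κ ∈ Set.Ioo (0:ℝ) 1) (n : ℕ) (t : ℝ) :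
    ‖c n * (κ ^ 2 * Real.sin t ^ 2) ^ n‖ ≤ (κ ^ 2) ^ n := by
  obtain ⟨hκ0, hκ1⟩ := hκ
  have hx0 : 0 ≤ κ ^ 2 * Real.sin t ^ 2 := by positivity
  have hx1 : κ ^ 2 * Real.sin t ^ 2 ≤ κ ^ 2 := by
    nlinarith [Real.sin_sq_le_one t, sq_nonneg κ]
  have hc := c_nonneg n
  have h1 : ‖c n * (κ ^ 2 * Real.sin t ^ 2) ^ n‖ = c n * (κ ^ 2 * Real.sin t ^ 2) ^ n := by
    rw [Real.norm_eq_abs, abs_of_nonneg (by positivity)]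
  rw [h1]
  calc c n * (κ ^ 2 * Real.sin t ^ 2) ^ n ≤ 1 * (κ ^ 2) ^ n := by
        apply mul_le_mul (c_le_one n) (pow_le_pow_left₀ hx0 hx1 n) (by positivity) (by norm_num)
    _ = (κ ^ 2) ^ n := one_mul _

lemma hypF_eq (x : ℝ) :
    hypF (1/3) (2/3) (1/2) x = ∑' n : ℕ, c n * x ^ n := by
  simp only [hypF, c, P]

lemma hypF_one_eq (x : ℝ) :
    hypF (1/3) (2/3) 1 x =
      ∑' n : ℕ, (P (1/3) n * P (2/3) n) / ((n.factorial : ℝ) * n.factorial) * x ^ n := by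
  simp only [hypF, P, ascPochhammer_eval_one]

lemma continuous_integrand {κ : ℝ} (hκ : κ ∈ Set.Ioo (0:ℝ) 1) :
    Continuous fun t : ℝ => hypF (1/3) (2/3) (1/2) (κ ^ 2 * Real.sin t ^ 2) := by
  have hsum : Summable fun n : ℕ => (κ ^ 2) ^ n :=
    summable_geometric_of_lt_one (by positivity) (by nlinarith [hκ.1, hκ.2])
  simp only [hypF_eq]
  exact continuous_tsum
    (fun n => continuous_const.mul ((continuous_const.mul (Real.continuous_sin.pow 2)).pow n))
    hsum (fun n t => pointwise_bound hκ n t)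

lemma term_integral {κ : ℝ} (hκ : κ ∈ Set.Ioo (0:ℝ) 1) (n : ℕ) :
    ∫ t in (0:ℝ)..π, c n * (κ ^ 2 * Real.sin t ^ 2) ^ n =
      π * ((P (1/3) n * P (2/3) n) / ((n.factorial : ℝ) * n.factorial) * (κ ^ 2) ^ n) := by
  have h3 := P_pos (by norm_num : (0:ℝ) < 1/2) n
  have h4 : (0:ℝ) < n.factorial := by positivity
  have hpt : ∀ t : ℝ, c n * (κ ^ 2 * Real.sin t ^ 2) ^ n
      = c n * (κ ^ 2) ^ n * Real.sin t ^ (2 * n) := by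
    intro t
    rw [mul_pow, ← pow_mul (Real.sin t) 2 n]
    ring
  simp_rw [hpt]
  rw [intervalIntegral.integral_const_mul, integral_sin_pow_even, prod_eq]
  rw [c]
  field_simp

lemma key_integral {κ : ℝ} (hκ : κ ∈ Set.Ioo (0:ℝ) 1) :
    ∫ t in (0:ℝ)..π, hypF (1/3) (2/3) (1/2) (κ ^ 2 * Real.sin t ^ 2) =
      π * hypF (1/3) (2/3) 1 (κ ^ 2) := by
  have hsum : Summable fun n : ℕ => (κ ^ 2) ^ n :=
    summable_geometric_of_lt_one (by positivity) (by nlinarith [hκ.1, hκ.2])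
  set Fc : ℕ → C(ℝ, ℝ) := fun n =>
    ⟨fun t => c n * (κ ^ 2 * Real.sin t ^ 2) ^ n,
      continuous_const.mul ((continuous_const.mul (Real.continuous_sin.pow 2)).pow n)⟩ with hFc
  have hnorm : Summable fun n : ℕ =>
      ‖(Fc n).restrict (⟨Set.uIcc (0:ℝ) π, isCompact_uIcc⟩ : TopologicalSpace.Compacts ℝ)‖ := by
    apply Summable.of_nonneg_of_le (fun n => norm_nonneg _) _ hsum
    intro n
    rw [ContinuousMap.norm_le _ (by positivity)]
    rintro ⟨x, hx⟩
    exact pointwise_bound hκ n x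
  have hswap := intervalIntegral.tsum_intervalIntegral_eq_of_summable_norm (a := 0) (b := π) hnorm
  have heq : (fun t : ℝ => ∑' n : ℕ, (Fc n) t)
      = fun t : ℝ => hypF (1/3) (2/3) (1/2) (κ ^ 2 * Real.sin t ^ 2) := by
    funext t
    rw [hypF_eq]
    rfl
  calc ∫ t in (0:ℝ)..π, hypF (1/3) (2/3) (1/2) (κ ^ 2 * Real.sin t ^ 2)
      = ∫ t in (0:ℝ)..π, ∑' n : ℕ, (Fc n) t := by rw [heq]
    _ = ∑' n : ℕ, ∫ t in (0:ℝ)..π, (Fc n) t := hswap.symm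
    _ = ∑' n : ℕ, π * ((P (1/3) n * P (2/3) n) / ((n.factorial : ℝ) * n.factorial)
          * (κ ^ 2) ^ n) := by
        refine tsum_congr fun n => ?_
        exact term_integral hκ n
    _ = π * ∑' n : ℕ, (P (1/3) n * P (2/3) n) / ((n.factorial : ℝ) * n.factorial)
          * (κ ^ 2) ^ n := tsum_mul_left
    _ = π * hypF (1/3) (2/3) 1 (κ ^ 2) := by rw [hypF_one_eq]

end Stmt3Aux

/-- Fix κ ∈ (0,1), let φ be the inverse of T ↦ ∫₀ᵀ F(1/3, 2/3; 1/2; κ²sin²t) dt, and let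
K = (π/2)·F(1/3,2/3;1;κ²).  Then δ = φ′ is periodic on ℝ with period 2K. -/
theorem stmt3 (κ : ℝ) (hκ : κ ∈ Set.Ioo (0:ℝ) 1)
    (G : ℝ → ℝ)
    (hG : G = fun T : ℝ => ∫ t in (0:ℝ)..T, hypF (1/3) (2/3) (1/2) (κ^2 * Real.sin t ^ 2))
    (φ : ℝ → ℝ) (hφ₁ : Function.LeftInverse φ G) (hφ₂ : Function.RightInverse φ G)
    (K : ℝ) (hK : K = π/2 * hypF (1/3) (2/3) 1 (κ^2)) :
    Function.Periodic (deriv φ) (2 * K) := by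
  -- the integrand is continuous and π-periodic
  set f : ℝ → ℝ := fun t => hypF (1/3) (2/3) (1/2) (κ^2 * Real.sin t ^ 2) with hf
  have hcont : Continuous f := Stmt3Aux.continuous_integrand hκ
  have hper : Function.Periodic f π := by
    intro t
    simp only [hf, Real.sin_add_pi, neg_sq]
  have h_int : ∀ t₁ t₂ : ℝ, IntervalIntegrable f MeasureTheory.volume t₁ t₂ :=
    fun t₁ t₂ => hcont.intervalIntegrable t₁ t₂
  -- G(π) = 2K
  have hGπ : G π = 2 * K := by
    rw [hG]
    simp only
    rw [Stmt3Aux.key_integral hκ, hK]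
    ring
  -- G(x + π) = G(x) + 2K
  have hGadd : ∀ x : ℝ, G (x + π) = G x + 2 * K := by
    intro x
    have hsplit := hper.intervalIntegral_add_eq_add 0 x h_int
    rw [zero_add] at hsplit
    have e1 : G (x + π) = ∫ t in (0:ℝ)..x + π, f t := by rw [hG]
    have e2 : G x = ∫ t in (0:ℝ)..x, f t := by rw [hG]
    have e3 : (∫ t in (0:ℝ)..π, f t) = 2 * K := by rw [← hGπ, hG]
    rw [e1, hsplit, ← e2, e3]
  -- φ(y + 2K) = φ(y) + π
  have hφadd : ∀ y : ℝ, φ (y + 2 * K) = φ y + π := by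
    intro y
    have h1 : G (φ y + π) = y + 2 * K := by rw [hGadd, hφ₂ y]
    rw [← h1, hφ₁]
  -- conclude for the derivative
  intro x
  have h2 : (fun y => φ (y + 2 * K)) = fun y => φ y + π := by
    funext y; exact hφadd y
  calc deriv φ (x + 2 * K) = deriv (fun y => φ (y + 2 * K)) x :=
        (deriv_comp_add_const φ (2 * K) x).symm
    _ = deriv (fun y => φ y + π) x := by rw [h2]
    _ = deriv φ x := deriv_add_const π
end

section
/- Fix κ ∈ (0,1) and λ = √(1−κ²). If δ : ℝ → ℝ satisfies δ(0) = 1 and the differential equation 9(δ′)² = 4(1−δ)(δ³ + 3δ² − 4λ²), and p satisfies (p′)² = 4p³ − g₂p − g₃ with g₂ = (4/27)(9−8κ²), g₃ = (8/729)(27−36κ²+8κ⁴), then the algebraic relation (1−δ)(1/3 + p) = (4/9)κ² is consistent with both differential equations: substituting p = (4κ²/9)/(1−δ) − 1/3 into (p′)² − 4p³ + g₂p + g₃ and using 9(δ′)² = 4(1−δ)(δ³+3δ²−4λ²) yields an identity. -/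
/-! Writing `p = c / (1 - δ) - 1/3` with `c = 4κ²/9`, both `(p')²` and the Weierstrass cubic
`4p³ - g₂p - g₃` are `(c / (1 - δ)²)²` times the corresponding side of the equation for `δ`
(after `λ² = 1 - κ²`), so the Weierstrass equation is the `δ`-equation rescaled. -/

theorem HasDerivAt.const_div_one_sub_sub {f : ℝ → ℝ} {f' x : ℝ} (hf : HasDerivAt f f' x)
    (hx : 1 - f x ≠ 0) (c d : ℝ) :
    HasDerivAt (fun y => c / (1 - f y) - d) (c * f' / (1 - f x) ^ 2) x := by
  refine (((hasDerivAt_const x c).div (hf.const_sub 1) hx).sub_const d).congr_deriv ?_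
  ring

theorem weierstrass_cubic_shen_substitution (κ δ : ℝ) (hδ : 1 - δ ≠ 0) :
    4 * ((4 * κ ^ 2 / 9) / (1 - δ) - 1 / 3) ^ 3
        - 4 / 27 * (9 - 8 * κ ^ 2) * ((4 * κ ^ 2 / 9) / (1 - δ) - 1 / 3)
        - 8 / 729 * (27 - 36 * κ ^ 2 + 8 * κ ^ 4)
      = ((4 * κ ^ 2 / 9) / (1 - δ) ^ 2) ^ 2
          * (4 / 9 * (1 - δ) * (δ ^ 3 + 3 * δ ^ 2 - 4 * (1 - κ ^ 2))) := by
  field_simp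
  ring

theorem stmt15_general (κ lam : ℝ) (hκ : κ ∈ Set.Ioo (0:ℝ) 1) (hlam : lam = Real.sqrt (1 - κ^2))
    (g₂ g₃ : ℝ) (hg₂ : g₂ = 4/27 * (9 - 8 * κ^2))
    (hg₃ : g₃ = 8/729 * (27 - 36 * κ^2 + 8 * κ^4))
    (δ : ℝ → ℝ) (hδdiff : Differentiable ℝ δ)
    (hode : ∀ u : ℝ, 9 * (deriv δ u)^2
      = 4 * (1 - δ u) * ((δ u)^3 + 3 * (δ u)^2 - 4 * lam^2))
    (p : ℝ → ℝ) (hp : p = fun u => (4 * κ^2 / 9) / (1 - δ u) - 1/3) :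
    ∀ u : ℝ, δ u ≠ 1 →
      (deriv p u)^2 - (4 * (p u)^3 - g₂ * p u - g₃) = 0 := by
  intro u hu
  have hs : 1 - δ u ≠ 0 := sub_ne_zero.mpr hu.symm
  have hlam2 : lam ^ 2 = 1 - κ ^ 2 := by
    rw [hlam, Real.sq_sqrt]
    nlinarith [hκ.1, hκ.2]
  have hderiv : deriv p u = (4 * κ ^ 2 / 9) * deriv δ u / (1 - δ u) ^ 2 := by
    rw [hp]
    exact ((hδdiff u).hasDerivAt.const_div_one_sub_sub hs _ _).deriv
  have hδ' : (deriv δ u) ^ 2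
      = 4 / 9 * (1 - δ u) * ((δ u) ^ 3 + 3 * (δ u) ^ 2 - 4 * (1 - κ ^ 2)) := by
    rw [← hlam2]
    linarith [hode u]
  rw [hderiv, hg₂, hg₃, hp, weierstrass_cubic_shen_substitution κ (δ u) hs, ← hδ']
  ring

/-- Shen's change of variables in signature three: if 9(δ′)² = 4(1−δ)(δ³+3δ²−4λ²) with
δ(0) = 1, then p = (4κ²/9)/(1−δ) − 1/3 satisfies the Weierstrass equation
(p′)² = 4p³ − g₂p − g₃ with g₂ = (4/27)(9−8κ²), g₃ = (8/729)(27−36κ²+8κ⁴). -/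
theorem stmt15 (κ lam : ℝ) (hκ : κ ∈ Set.Ioo (0:ℝ) 1) (hlam : lam = Real.sqrt (1 - κ^2))
    (g₂ g₃ : ℝ) (hg₂ : g₂ = 4/27 * (9 - 8 * κ^2))
    (hg₃ : g₃ = 8/729 * (27 - 36 * κ^2 + 8 * κ^4))
    (δ : ℝ → ℝ) (hδdiff : Differentiable ℝ δ) (hδ0 : δ 0 = 1)
    (hode : ∀ u : ℝ, 9 * (deriv δ u)^2
      = 4 * (1 - δ u) * ((δ u)^3 + 3 * (δ u)^2 - 4 * lam^2))
    (p : ℝ → ℝ) (hp : p = fun u => (4 * κ^2 / 9) / (1 - δ u) - 1/3) :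
    ∀ u : ℝ, δ u ≠ 1 →
      (deriv p u)^2 - (4 * (p u)^3 - g₂ * p u - g₃) = 0 :=
  stmt15_general κ lam hκ hlam g₂ g₃ hg₂ hg₃ δ hδdiff hode p hp
end
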